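/- Steiner's formula for boxes in ℝ³: for the rectangular box A = [0,a] × [0,b] × [0,c] and any ρ > 0, λ₃(Tube(A,ρ)) = abc + 2ρ(ab+bc+ca) + πρ²(a+b+c) + (4π/3)ρ³. -/

import Mathlib

/-!
The point of the box nearest to `x` can be chosen coordinatewise, so `x` lies in the tube iff
`d_a(x₀)² + d_b(x₁)² + d_c(x₂)² ≤ ρ²`, where `d_L` is the distance to `[0, L]`. This set is
measured by slicing off one coordinate at a time. Integrating `φ ∘ d_L` over the line gives
`L φ(0) + 2 ∫₀^ρ φ` (the two ends of the neighbourhood contribute equally), which turns the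
length `L + 2r` of a thickened interval into the area `bc + 2r(b + c) + πr²` of a thickened
rectangle, and that into the volume of the thickened box; the `π`'s come from
`∫₀^ρ √(ρ² - t²) dt = πρ²/4`.
-/

open MeasureTheory Real Set

/-- Tube of radius `ρ` around a set in `ℝ³`. -/
def Tube (A : Set (EuclideanSpace ℝ (Fin 3))) (ρ : ℝ) : Set (EuclideanSpace ℝ (Fin 3)) :=
  {x | ∃ y ∈ A, dist x y ≤ ρ}

/-- The box `[0,a] × [0,b] × [0,c]` in `ℝ³`. -/
def Box (a b c : ℝ) : Set (EuclideanSpace ℝ (Fin 3)) :=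
  {x | x 0 ∈ Set.Icc 0 a ∧ x 1 ∈ Set.Icc 0 b ∧ x 2 ∈ Set.Icc 0 c}

/-- `distIcc L t` is the distance from `t` to `[0, L]`. -/
def distIcc (L t : ℝ) : ℝ := max (max (-t) (t - L)) 0

section distIcc

variable {L t r : ℝ}

lemma distIcc_nonneg (L t : ℝ) : 0 ≤ distIcc L t := le_max_right _ _

@[fun_prop]
lemma continuous_distIcc (L : ℝ) : Continuous (distIcc L) := by
  unfold distIcc; fun_prop

lemma distIcc_le_iff (hr : 0 ≤ r) : distIcc L t ≤ r ↔ t ∈ Icc (-r) (L + r) := by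
  simp only [distIcc, max_le_iff, mem_Icc]
  constructor
  · rintro ⟨⟨h₁, h₂⟩, -⟩; constructor <;> linarith
  · rintro ⟨h₁, h₂⟩; exact ⟨⟨by linarith, by linarith⟩, hr⟩

lemma distIcc_of_nonpos (hL : 0 ≤ L) (ht : t ≤ 0) : distIcc L t = -t := by
  simp only [distIcc]
  rw [max_eq_left (a := -t) (by linarith), max_eq_left (by linarith)]

lemma distIcc_of_mem (ht : t ∈ Icc 0 L) : distIcc L t = 0 := by
  simp only [distIcc]
  exact max_eq_right (max_le (by linarith [ht.1]) (by linarith [ht.2]))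

lemma distIcc_of_ge (hL : 0 ≤ L) (ht : L ≤ t) : distIcc L t = t - L := by
  simp only [distIcc]
  rw [max_eq_right (a := -t) (by linarith), max_eq_left (by linarith)]

lemma distIcc_le_abs_sub {y : ℝ} (hy : y ∈ Icc 0 L) : distIcc L t ≤ |t - y| :=
  max_le (max_le (by linarith [neg_le_abs (t - y), hy.1])
    (by linarith [le_abs_self (t - y), hy.2])) (abs_nonneg _)

lemma distIcc_sq_le_sq_sub {y : ℝ} (hy : y ∈ Icc 0 L) : distIcc L t ^ 2 ≤ (t - y) ^ 2 :=
  sq_abs (t - y) ▸ pow_le_pow_left₀ (distIcc_nonneg L t) (distIcc_le_abs_sub hy) 2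

lemma exists_mem_Icc_abs_sub_eq_distIcc (hL : 0 ≤ L) (t : ℝ) :
    ∃ y ∈ Icc 0 L, |t - y| = distIcc L t := by
  rcases le_total t 0 with ht | ht
  · exact ⟨0, left_mem_Icc.2 hL, by rw [sub_zero, abs_of_nonpos ht, distIcc_of_nonpos hL ht]⟩
  rcases le_total t L with htL | htL
  · exact ⟨t, ⟨ht, htL⟩, by rw [sub_self, abs_zero, distIcc_of_mem ⟨ht, htL⟩]⟩
  · exact ⟨L, right_mem_Icc.2 hL, by rw [abs_of_nonneg (by linarith), distIcc_of_ge hL htL]⟩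

lemma integral_comp_distIcc {φ : ℝ → ℝ} (hφ : Continuous φ) (hL : 0 ≤ L) {ρ : ℝ} (hρ : 0 ≤ ρ) :
    ∫ x in -ρ..L + ρ, φ (distIcc L x) = L * φ 0 + 2 * ∫ t in 0..ρ, φ t := by
  have hint (u v : ℝ) : IntervalIntegrable (fun x ↦ φ (distIcc L x)) volume u v :=
    (hφ.comp (continuous_distIcc L)).intervalIntegrable u v
  have left : ∫ x in -ρ..0, φ (distIcc L x) = ∫ t in 0..ρ, φ t := by
    rw [intervalIntegral.integral_congr (g := fun x ↦ φ (-x)) fun x hx ↦ by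
        rw [uIcc_of_le (by linarith)] at hx; simp only [distIcc_of_nonpos hL hx.2],
      intervalIntegral.integral_comp_neg, neg_zero, neg_neg]
  have middle : ∫ x in 0..L, φ (distIcc L x) = L * φ 0 := by
    rw [intervalIntegral.integral_congr (g := fun _ ↦ φ 0) fun x hx ↦ by
        rw [uIcc_of_le hL] at hx; simp only [distIcc_of_mem hx],
      intervalIntegral.integral_const, sub_zero, smul_eq_mul]
  have right : ∫ x in L..L + ρ, φ (distIcc L x) = ∫ t in 0..ρ, φ t := by
    rw [intervalIntegral.integral_congr (g := fun x ↦ φ (x - L)) fun x hx ↦ by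
        rw [uIcc_of_le (by linarith)] at hx; simp only [distIcc_of_ge hL hx.1],
      intervalIntegral.integral_comp_sub_right, sub_self, add_sub_cancel_left]
  rw [← intervalIntegral.integral_add_adjacent_intervals (hint _ _) (hint _ _),
    ← intervalIntegral.integral_add_adjacent_intervals (hint 0 L) (hint _ _), left, middle, right]
  ring

end distIcc

lemma integral_sqrt_one_sub_sq_zero_one : ∫ x in (0 : ℝ)..1, √(1 - x ^ 2) = π / 4 := by
  have hint (u v : ℝ) : IntervalIntegrable (fun x : ℝ ↦ √(1 - x ^ 2)) volume u v :=
    (by fun_prop : Continuous fun x : ℝ ↦ √(1 - x ^ 2)).intervalIntegrable u v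
  have heven : ∫ x in (-1 : ℝ)..0, √(1 - x ^ 2) = ∫ x in (0 : ℝ)..1, √(1 - x ^ 2) := by
    have := intervalIntegral.integral_comp_neg (a := (0 : ℝ)) (b := 1) fun x ↦ √(1 - x ^ 2)
    simp only [neg_sq, neg_zero] at this
    exact this.symm
  have := intervalIntegral.integral_add_adjacent_intervals (hint (-1) 0) (hint 0 1)
  rw [heven, integral_sqrt_one_sub_sq] at this
  linarith

lemma integral_sqrt_sq_sub_sq {r : ℝ} (hr : 0 ≤ r) :
    ∫ x in (0 : ℝ)..r, √(r ^ 2 - x ^ 2) = π * r ^ 2 / 4 := by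
  rcases hr.eq_or_lt with rfl | hr
  · simp
  have hscale : ∀ u : ℝ, √(r ^ 2 - (r * u) ^ 2) = r * √(1 - u ^ 2) := fun u ↦ by
    rw [show r ^ 2 - (r * u) ^ 2 = r ^ 2 * (1 - u ^ 2) by ring, sqrt_mul (sq_nonneg r),
      sqrt_sq hr.le]
  have :=
    intervalIntegral.integral_comp_mul_left (fun x ↦ √(r ^ 2 - x ^ 2)) hr.ne' (a := 0) (b := 1)
  simp only [hscale, intervalIntegral.integral_const_mul, integral_sqrt_one_sub_sq_zero_one,
    mul_zero, mul_one, smul_eq_mul] at this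
  field_simp at this
  linarith

lemma volume_distIcc_sq_le {L r : ℝ} (hr : 0 ≤ r) :
    volume {t : ℝ | distIcc L t ^ 2 ≤ r ^ 2} = ENNReal.ofReal (L + 2 * r) := by
  have : {t : ℝ | distIcc L t ^ 2 ≤ r ^ 2} = Icc (-r) (L + r) := by
    ext t
    rw [mem_ofPred_eq, pow_le_pow_iff_left₀ (distIcc_nonneg L t) hr two_ne_zero,
      distIcc_le_iff hr]
  rw [this, volume_Icc]
  ring_nf

/-- Cavalieri: the slice over `x` is the sublevel set `{h ≤ r²}` with `r = √(ρ² - distIcc L x ²)`,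
and it is empty when `distIcc L x > ρ`. -/
lemma volume_distIcc_sq_add_le {β : Type*} [MeasureSpace β] [SFinite (volume : Measure β)]
    {h : β → ℝ} (hh : Measurable h) (hh_nonneg : ∀ q, 0 ≤ h q) {V : ℝ → ℝ} (hV : Continuous V)
    (hV_nonneg : ∀ r, 0 ≤ r → 0 ≤ V r)
    (hV_vol : ∀ r, 0 ≤ r → volume {q | h q ≤ r ^ 2} = ENNReal.ofReal (V r))
    {L ρ : ℝ} (hL : 0 ≤ L) (hρ : 0 ≤ ρ) :
    volume {p : ℝ × β | distIcc L p.1 ^ 2 + h p.2 ≤ ρ ^ 2} =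
      ENNReal.ofReal (L * V ρ + 2 * ∫ t in 0..ρ, V √(ρ ^ 2 - t ^ 2)) := by
  set φ : ℝ → ℝ := fun t ↦ V √(ρ ^ 2 - t ^ 2)
  have hφ : Continuous φ := by fun_prop
  have hmeas : MeasurableSet {p : ℝ × β | distIcc L p.1 ^ 2 + h p.2 ≤ ρ ^ 2} :=
    measurableSet_le
      ((((continuous_distIcc L).measurable.comp measurable_fst).pow_const 2).add
        (hh.comp measurable_snd)) measurable_const
  have slice (x : ℝ) : volume (Prod.mk x ⁻¹' {p : ℝ × β | distIcc L p.1 ^ 2 + h p.2 ≤ ρ ^ 2}) =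
      (Icc (-ρ) (L + ρ)).indicator (fun x ↦ ENNReal.ofReal (φ (distIcc L x))) x := by
    by_cases hx : distIcc L x ≤ ρ
    · have hsq : 0 ≤ ρ ^ 2 - distIcc L x ^ 2 := by nlinarith [distIcc_nonneg L x]
      rw [indicator_of_mem ((distIcc_le_iff hρ).1 hx), ← hV_vol _ (sqrt_nonneg _), sq_sqrt hsq]
      congr 1
      ext q
      simp only [mem_preimage, mem_ofPred_eq]
      constructor <;> intro <;> linarith
    · rw [indicator_of_notMem (mt (distIcc_le_iff hρ).2 hx)]
      convert measure_empty (μ := (volume : Measure β))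
      ext q
      simp only [mem_preimage, mem_ofPred_eq, mem_empty_iff_false, iff_false, not_le]
      nlinarith [hh_nonneg q]
  rw [Measure.volume_eq_prod, Measure.prod_apply hmeas]
  simp_rw [slice]
  rw [lintegral_indicator measurableSet_Icc,
    ← ofReal_integral_eq_lintegral_ofReal (f := fun x ↦ φ (distIcc L x))
      (hφ.comp (continuous_distIcc L)).integrableOn_Icc
      (Filter.Eventually.of_forall fun x ↦ hV_nonneg _ (sqrt_nonneg _)),
    integral_Icc_eq_integral_Ioc, ← intervalIntegral.integral_of_le (by linarith),
    integral_comp_distIcc hφ hL hρ]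
  simp only [φ, zero_pow two_ne_zero, sub_zero, sqrt_sq hρ]

lemma volume_rectangle_thickening {b c r : ℝ} (hb : 0 ≤ b) (hc : 0 ≤ c) (hr : 0 ≤ r) :
    volume {p : ℝ × ℝ | distIcc b p.1 ^ 2 + distIcc c p.2 ^ 2 ≤ r ^ 2} =
      ENNReal.ofReal (b * c + 2 * r * (b + c) + π * r ^ 2) := by
  rw [volume_distIcc_sq_add_le ((continuous_distIcc c).measurable.pow_const 2)
    (fun _ ↦ sq_nonneg _) (V := fun r ↦ c + 2 * r) (by fun_prop) (fun r hr ↦ by positivity)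
    (fun r hr ↦ volume_distIcc_sq_le hr) hb hr]
  congr 1
  rw [intervalIntegral.integral_add intervalIntegrable_const
    ((by fun_prop : Continuous fun t : ℝ ↦ 2 * √(r ^ 2 - t ^ 2)).intervalIntegrable _ _),
    intervalIntegral.integral_const, intervalIntegral.integral_const_mul,
    integral_sqrt_sq_sub_sq hr, smul_eq_mul]
  ring

lemma volume_box_thickening {a b c ρ : ℝ} (ha : 0 ≤ a) (hb : 0 ≤ b) (hc : 0 ≤ c) (hρ : 0 ≤ ρ) :
    volume {p : ℝ × ℝ × ℝ |
        distIcc a p.1 ^ 2 + (distIcc b p.2.1 ^ 2 + distIcc c p.2.2 ^ 2) ≤ ρ ^ 2} =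
      ENNReal.ofReal (a * b * c + 2 * ρ * (a * b + b * c + c * a) + π * ρ ^ 2 * (a + b + c)
        + (4 * π / 3) * ρ ^ 3) := by
  rw [volume_distIcc_sq_add_le (by fun_prop) (fun _ ↦ by positivity)
    (V := fun r ↦ b * c + 2 * r * (b + c) + π * r ^ 2) (by fun_prop)
    (fun r hr ↦ by positivity) (fun r hr ↦ volume_rectangle_thickening hb hc hr) ha hρ]
  congr 1
  have hsq : ∀ t ∈ uIcc 0 ρ,
      b * c + 2 * √(ρ ^ 2 - t ^ 2) * (b + c) + π * √(ρ ^ 2 - t ^ 2) ^ 2 =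
        b * c + (2 * (b + c)) * √(ρ ^ 2 - t ^ 2) + π * (ρ ^ 2 - t ^ 2) := fun t ht ↦ by
    rw [uIcc_of_le hρ] at ht
    rw [sq_sqrt (by nlinarith [ht.1, ht.2])]
    ring
  have hquad : ∫ t in (0 : ℝ)..ρ, π * (ρ ^ 2 - t ^ 2) = π * (2 / 3 * ρ ^ 3) := by
    rw [intervalIntegral.integral_const_mul, intervalIntegral.integral_sub intervalIntegrable_const
      ((continuous_pow 2).intervalIntegrable _ _), intervalIntegral.integral_const, integral_pow,
      smul_eq_mul]
    ring
  rw [intervalIntegral.integral_congr hsq, intervalIntegral.integral_add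
      (intervalIntegrable_const.add ((by fun_prop : Continuous fun t : ℝ ↦
        2 * (b + c) * √(ρ ^ 2 - t ^ 2)).intervalIntegrable _ _))
      ((by fun_prop : Continuous fun t : ℝ ↦ π * (ρ ^ 2 - t ^ 2)).intervalIntegrable _ _),
    intervalIntegral.integral_add intervalIntegrable_const
      ((by fun_prop : Continuous fun t : ℝ ↦
        2 * (b + c) * √(ρ ^ 2 - t ^ 2)).intervalIntegrable _ _),
    intervalIntegral.integral_const, intervalIntegral.integral_const_mul,
    integral_sqrt_sq_sub_sq hρ, hquad, smul_eq_mul]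
  ring

lemma tube_box_eq {a b c ρ : ℝ} (ha : 0 ≤ a) (hb : 0 ≤ b) (hc : 0 ≤ c) (hρ : 0 ≤ ρ) :
    Tube (Box a b c) ρ = (fun x : EuclideanSpace ℝ (Fin 3) ↦ (x 0, x 1, x 2)) ⁻¹'
      {p | distIcc a p.1 ^ 2 + (distIcc b p.2.1 ^ 2 + distIcc c p.2.2 ^ 2) ≤ ρ ^ 2} := by
  ext x
  simp only [Tube, Box, mem_preimage, mem_ofPred_eq, EuclideanSpace.dist_eq, Fin.sum_univ_three,
    Real.dist_eq, sq_abs, sqrt_le_left hρ]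
  constructor
  · rintro ⟨y, ⟨hy₀, hy₁, hy₂⟩, hxy⟩
    linarith [distIcc_sq_le_sq_sub (t := x 0) hy₀, distIcc_sq_le_sq_sub (t := x 1) hy₁,
      distIcc_sq_le_sq_sub (t := x 2) hy₂]
  · intro hx
    obtain ⟨y₀, hy₀, h₀⟩ := exists_mem_Icc_abs_sub_eq_distIcc ha (x 0)
    obtain ⟨y₁, hy₁, h₁⟩ := exists_mem_Icc_abs_sub_eq_distIcc hb (x 1)
    obtain ⟨y₂, hy₂, h₂⟩ := exists_mem_Icc_abs_sub_eq_distIcc hc (x 2)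
    refine ⟨!₂[y₀, y₁, y₂], ⟨hy₀, hy₁, hy₂⟩, ?_⟩
    simp only [Fin.isValue, Matrix.cons_val_zero, Matrix.cons_val_one, Matrix.cons_val]
    rw [← sq_abs (x 0 - y₀), ← sq_abs (x 1 - y₁), ← sq_abs (x 2 - y₂), h₀, h₁, h₂]
    linarith

lemma measurePreserving_euclideanSpace_fin_three :
    MeasurePreserving (fun x : EuclideanSpace ℝ (Fin 3) ↦ (x 0, x 1, x 2)) volume volume :=
  ((MeasurePreserving.id volume).prod (volume_preserving_piFinTwo fun _ ↦ ℝ)).comp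
    ((volume_preserving_piFinSuccAbove (fun _ : Fin 3 ↦ ℝ) 0).comp
      (EuclideanSpace.volume_preserving_symm_measurableEquiv_toLp (Fin 3)))

/-- Steiner's formula for rectangular boxes in `ℝ³`. -/
theorem steiner_box (a b c : ℝ) (ha : 0 < a) (hb : 0 < b) (hc : 0 < c)
    (ρ : ℝ) (hρ : 0 < ρ) :
    (volume (Tube (Box a b c) ρ)).toReal =
      a * b * c + 2 * ρ * (a * b + b * c + c * a) + π * ρ ^ 2 * (a + b + c)
        + (4 * π / 3) * ρ ^ 3 := by
  have hmeas : MeasurableSet {p : ℝ × ℝ × ℝ |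
      distIcc a p.1 ^ 2 + (distIcc b p.2.1 ^ 2 + distIcc c p.2.2 ^ 2) ≤ ρ ^ 2} :=
    measurableSet_le (by fun_prop) measurable_const
  rw [tube_box_eq ha.le hb.le hc.le hρ.le,
    measurePreserving_euclideanSpace_fin_three.measure_preimage hmeas.nullMeasurableSet,
    volume_box_thickening ha.le hb.le hc.le hρ.le, ENNReal.toReal_ofReal (by positivity)]
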